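/- Let H be a separable complex Hilbert space and {(W_i, v_i)}_{i∈ℕ} a fusion frame for H with lower bound A > 0, i.e. A‖x‖² ≤ Σ_i v_i² ‖P_{W_i} x‖² ≤ B‖x‖² for all x ∈ H, where P_{W_i} is the orthogonal projection onto the closed subspace W_i. Assume Σ_i v_i² = 1, and let (Ψ_k)_{k∈ℕ} be an i.i.d. sequence of random operators with ℙ(Ψ_k = P_{W_i}) = v_i² for each i. Set T_k = Ψ_k (I − Ψ_{k−1})⋯(I − Ψ₁). Then for every x ∈ H, lim_{n→∞} 𝔼[ Σ_{k=1}^{n} ‖T_k x‖² ] = ‖x‖²; that is, {T_k}_{k∈ℕ} is a random operator-valued Parseval frame for H. -/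

import Mathlib

open MeasureTheory ProbabilityTheory Filter

/-- The σ-algebra on `B(H)` generated by the point evaluations `T ↦ T x`, i.e. the σ-algebra
corresponding to measurability in the strong operator sense. -/
noncomputable def strongMS (H : Type*) [NormedAddCommGroup H] [InnerProductSpace ℂ H] :
    MeasurableSpace (H →L[ℂ] H) :=
  ⨆ x : H, (borel H).comap fun T => T x

/-- The orthogonal projection onto a closed subspace `W`, viewed as an operator `H → H`. -/
noncomputable def projL {H : Type*} [NormedAddCommGroup H] [InnerProductSpace ℂ H]
    (W : Submodule ℂ H) [CompleteSpace W] : H →L[ℂ] H :=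
  W.subtypeL ∘L W.orthogonalProjectionOnto

/-- The residual products `R₀ = I`, `R_n(ω) = (I - Ψ_n(ω))⋯(I - Ψ₁(ω))`.
Random operators are indexed starting from `1`, i.e. `Ψ 1, Ψ 2, …`. -/
noncomputable def residualProd {Ω H : Type*} [NormedAddCommGroup H] [InnerProductSpace ℂ H]
    (Ψ : ℕ → Ω → (H →L[ℂ] H)) (ω : Ω) : ℕ → (H →L[ℂ] H)
  | 0 => 1
  | n + 1 => (1 - Ψ (n + 1) ω) * residualProd Ψ ω n

/-!
Each `Ψ k ω` is an orthogonal projection, so Pythagoras telescopes the partial sums: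
`Σ_{k ≤ n} ‖T_k x‖² = ‖x‖² - ‖R_n x‖²` with `R_n = (I - Ψ_n)⋯(I - Ψ₁)`. The vector `R_n x`
is determined by `Ψ₁, …, Ψ_n` and takes only countably many values, while `Ψ_{n+1}` is
independent of them; on the event `R_n x = y` the lower frame bound gives the average
`Σ_i v_i² ‖y - P_{W_i} y‖² ≤ (1 - A) ‖y‖²` for `‖R_{n+1} x‖²`. Hence
`𝔼 ‖R_n x‖² ≤ (1 - A)ⁿ ‖x‖² → 0`.
-/

open scoped ENNReal

section Projections

variable {H : Type*} [NormedAddCommGroup H] [InnerProductSpace ℂ H]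

lemma norm_projL_sq_add_norm_sub_projL_sq (W : Submodule ℂ H) [CompleteSpace W] (z : H) :
    ‖projL W z‖ ^ 2 + ‖z - projL W z‖ ^ 2 = ‖z‖ ^ 2 := by
  rw [Submodule.norm_sq_eq_add_norm_sq_starProjection z W, W.starProjection_orthogonal_val]
  rfl

lemma residualProd_succ_apply {Ω : Type*} (Ψ : ℕ → Ω → (H →L[ℂ] H)) (ω : Ω) (n : ℕ) (x : H) :
    residualProd Ψ ω (n + 1) x = residualProd Ψ ω n x - Ψ (n + 1) ω (residualProd Ψ ω n x) :=
  rfl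

variable {Ω : Type*} {W : ℕ → Submodule ℂ H} [∀ i, CompleteSpace (W i)]
  {Ψ : ℕ → Ω → (H →L[ℂ] H)}

lemma sum_norm_apply_residualProd_sq_add (hvalues : ∀ k ω, ∃ i, Ψ k ω = projL (W i))
    (ω : Ω) (x : H) (n : ℕ) :
    ∑ k ∈ Finset.Icc 1 n, ‖Ψ k ω (residualProd Ψ ω (k - 1) x)‖ ^ 2
      + ‖residualProd Ψ ω n x‖ ^ 2 = ‖x‖ ^ 2 := by
  induction n with
  | zero => simp [residualProd]
  | succ n ih =>
    obtain ⟨i, hi⟩ := hvalues (n + 1) ω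
    rw [Finset.sum_Icc_succ_top (by omega), Nat.add_sub_cancel, residualProd_succ_apply, hi,
      ← ih, ← norm_projL_sq_add_norm_sub_projL_sq (W i) (residualProd Ψ ω n x)]
    ring

lemma norm_residualProd_apply_le (hvalues : ∀ k ω, ∃ i, Ψ k ω = projL (W i))
    (ω : Ω) (x : H) (n : ℕ) : ‖residualProd Ψ ω n x‖ ≤ ‖x‖ := by
  have h := sum_norm_apply_residualProd_sq_add hvalues ω x n
  have : 0 ≤ ∑ k ∈ Finset.Icc 1 n, ‖Ψ k ω (residualProd Ψ ω (k - 1) x)‖ ^ 2 :=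
    Finset.sum_nonneg fun _ _ => sq_nonneg _
  exact (sq_le_sq₀ (norm_nonneg _) (norm_nonneg _)).1 (by linarith)

lemma countable_range_residualProd_apply (hvalues : ∀ k ω, ∃ i, Ψ k ω = projL (W i))
    (x : H) : ∀ n, (Set.range fun ω => residualProd Ψ ω n x).Countable
  | 0 => (Set.countable_singleton x).mono Set.range_const_subset
  | n + 1 => by
    refine (Set.countable_iUnion fun i =>
      (countable_range_residualProd_apply hvalues x n).image fun y => y - projL (W i) y).mono ?_
    rintro _ ⟨ω, rfl⟩
    obtain ⟨i, hi⟩ := hvalues (n + 1) ω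
    exact Set.mem_iUnion.2 ⟨i, ⟨_, ⟨ω, rfl⟩, by simp only [residualProd_succ_apply, hi]⟩⟩

end Projections

lemma tsum_ofReal_mul_norm_sub_projL_sq_le {H : Type*} [NormedAddCommGroup H]
    [InnerProductSpace ℂ H] {W : ℕ → Submodule ℂ H} [∀ i, CompleteSpace (W i)] {v : ℕ → ℝ}
    {A : ℝ} (hsummable : ∀ x : H, Summable fun i => v i ^ 2 * ‖projL (W i) x‖ ^ 2)
    (hlow : ∀ x : H, A * ‖x‖ ^ 2 ≤ ∑' i, v i ^ 2 * ‖projL (W i) x‖ ^ 2)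
    (hprob : ∑' i, v i ^ 2 = 1) (y : H) :
    ∑' i, ENNReal.ofReal (v i ^ 2) * ENNReal.ofReal (‖y - projL (W i) y‖ ^ 2)
      ≤ ENNReal.ofReal (1 - A) * ENNReal.ofReal (‖y‖ ^ 2) := by
  have hv : HasSum (fun i => v i ^ 2) 1 := by
    by_cases h : Summable fun i => v i ^ 2
    · exact hprob ▸ h.hasSum
    · exact absurd hprob (by simp [tsum_eq_zero_of_not_summable h])
  have hsum : HasSum (fun i => v i ^ 2 * ‖y - projL (W i) y‖ ^ 2)
      (‖y‖ ^ 2 - ∑' i, v i ^ 2 * ‖projL (W i) y‖ ^ 2) := by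
    have hpyth : ∀ i, v i ^ 2 * ‖y - projL (W i) y‖ ^ 2
        = v i ^ 2 * ‖y‖ ^ 2 - v i ^ 2 * ‖projL (W i) y‖ ^ 2 := fun i => by
      rw [← norm_projL_sq_add_norm_sub_projL_sq (W i) y]
      ring
    simpa only [hpyth, one_mul] using (hv.mul_right (‖y‖ ^ 2)).sub (hsummable y).hasSum
  simp_rw [← ENNReal.ofReal_mul (sq_nonneg _)]
  rw [← ENNReal.ofReal_tsum_of_nonneg (fun i => by positivity) hsum.summable, hsum.tsum_eq,
    ← ENNReal.ofReal_mul' (sq_nonneg _)]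
  exact ENNReal.ofReal_le_ofReal (by linarith [hlow y])

section StrongMeasurability

variable {Ω H : Type*} [NormedAddCommGroup H] [InnerProductSpace ℂ H]
  [MeasurableSpace H] [BorelSpace H]

lemma measurable_strongMS_iff {m : MeasurableSpace Ω} {f : Ω → H →L[ℂ] H} :
    Measurable[m, strongMS H] f ↔ ∀ x, Measurable[m] fun ω => f ω x := by
  simp only [measurable_iff_comap_le, strongMS, MeasurableSpace.comap_iSup, iSup_le_iff,
    MeasurableSpace.comap_comp, ← BorelSpace.measurable_eq (α := H)]
  rfl

lemma measurable_apply_strongMS (x : H) : Measurable[strongMS H] fun T : H →L[ℂ] H => T x :=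
  measurable_strongMS_iff.1 (@measurable_id _ (strongMS H)) x

lemma measurableSet_singleton_strongMS [TopologicalSpace.SeparableSpace H] (Q : H →L[ℂ] H) :
    MeasurableSet[strongMS H] {Q} := by
  obtain ⟨D, hDc, hDd⟩ := TopologicalSpace.exists_countable_dense H
  have hQ : ({Q} : Set (H →L[ℂ] H)) = ⋂ z ∈ D, (fun T : H →L[ℂ] H => T z) ⁻¹' {Q z} := by
    ext T
    simp only [Set.mem_singleton_iff, Set.mem_iInter, Set.mem_preimage]
    refine ⟨fun h z _ => h ▸ rfl, fun h => ?_⟩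
    exact DFunLike.coe_injective (Continuous.ext_on hDd T.continuous Q.continuous h)
  rw [hQ]
  exact .biInter hDc fun z _ => measurable_apply_strongMS z (measurableSet_singleton _)

lemma Measurable.clm_apply_of_countable_range {m : MeasurableSpace Ω} {g : Ω → H}
    (hg : Measurable[m] g) (hgc : (Set.range g).Countable) {Φ : Ω → H →L[ℂ] H}
    (hΦ : ∀ y, Measurable[m] fun ω => Φ ω y) : Measurable[m] fun ω => Φ ω (g ω) := by
  intro s hs
  have hpre : (fun ω => Φ ω (g ω)) ⁻¹' s
      = ⋃ y ∈ Set.range g, g ⁻¹' {y} ∩ (fun ω => Φ ω y) ⁻¹' s := by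
    ext ω
    simp only [Set.mem_preimage, Set.mem_iUnion, Set.mem_inter_iff, Set.mem_singleton_iff]
    exact ⟨fun h => ⟨g ω, ⟨ω, rfl⟩, rfl, h⟩, by rintro ⟨_, _, rfl, h⟩; exact h⟩
  rw [hpre]
  exact .biUnion hgc fun y _ => (hg (measurableSet_singleton y)).inter (hΦ y hs)

noncomputable def historyMS (Ψ : ℕ → Ω → H →L[ℂ] H) (n : ℕ) : MeasurableSpace Ω :=
  ⨆ k ∈ Set.Iic n, (strongMS H).comap (Ψ k)

variable {W : ℕ → Submodule ℂ H} [∀ i, CompleteSpace (W i)] {Ψ : ℕ → Ω → (H →L[ℂ] H)}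

lemma measurable_historyMS_apply {k n : ℕ} (hkn : k ≤ n) (y : H) :
    Measurable[historyMS Ψ n] fun ω => Ψ k ω y :=
  (measurable_apply_strongMS y).comp <| measurable_iff_comap_le.2 <|
    le_iSup₂ (f := fun k (_ : k ∈ Set.Iic n) => (strongMS H).comap (Ψ k)) k hkn

lemma measurable_residualProd_apply (hvalues : ∀ k ω, ∃ i, Ψ k ω = projL (W i)) (x : H) :
    ∀ n, Measurable[historyMS Ψ n] fun ω => residualProd Ψ ω n x
  | 0 => measurable_const
  | n + 1 => by
    have hprev : Measurable[historyMS Ψ (n + 1)] fun ω => residualProd Ψ ω n x :=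
      (measurable_residualProd_apply hvalues x n).mono
        (biSup_mono fun _ hk => le_trans hk n.le_succ) le_rfl
    exact hprev.clm_apply_of_countable_range (Φ := fun ω => 1 - Ψ (n + 1) ω)
      (countable_range_residualProd_apply hvalues x n)
      fun y => (measurable_historyMS_apply le_rfl y).const_sub y

variable [MeasurableSpace Ω]

lemma comap_strongMS_le {f : Ω → H →L[ℂ] H} (hf : ∀ x, Measurable fun ω => f ω x) :
    (strongMS H).comap f ≤ ‹MeasurableSpace Ω› :=
  measurable_iff_comap_le.1 (measurable_strongMS_iff.2 hf)

lemma historyMS_le (hmeas : ∀ k, ∀ x : H, Measurable fun ω => Ψ k ω x) (n : ℕ) :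
    historyMS Ψ n ≤ ‹MeasurableSpace Ω› :=
  iSup₂_le fun k _ => comap_strongMS_le (hmeas k)

lemma measurable_norm_residualProd_apply_sq (hmeas : ∀ k, ∀ x : H, Measurable fun ω => Ψ k ω x)
    (hvalues : ∀ k ω, ∃ i, Ψ k ω = projL (W i)) (x : H) (n : ℕ) :
    Measurable fun ω => ‖residualProd Ψ ω n x‖ ^ 2 :=
  ((measurable_residualProd_apply hvalues x n).mono (historyMS_le hmeas n) le_rfl).norm.pow_const 2

lemma indep_historyMS_comap_succ {μ : Measure Ω}
    (hmeas : ∀ k, ∀ x : H, Measurable fun ω => Ψ k ω x)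
    (hindep : iIndepFun (m := fun _ : ℕ => strongMS H) Ψ μ) (n : ℕ) :
    Indep (historyMS Ψ n) ((strongMS H).comap (Ψ (n + 1))) μ := by
  have h := indep_iSup_of_disjoint (fun k => comap_strongMS_le (hmeas k)) hindep.iIndep
    (Set.disjoint_singleton_right.2 (by simp) : Disjoint (Set.Iic n) {n + 1})
  rw [iSup_singleton] at h
  exact h

end StrongMeasurability

section LIntegralDecomposition

variable {Ω : Type*} [mΩ : MeasurableSpace Ω] {μ : Measure Ω}

lemma lintegral_le_tsum_of_iUnion_eq_univ {ι : Type*} [Countable ι] {S : ι → Set Ω}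
    (hSm : ∀ i, MeasurableSet (S i)) (hS : ⋃ i, S i = Set.univ) {f : Ω → ℝ≥0∞}
    {c : ι → ℝ≥0∞} (hf : ∀ i, ∀ ω ∈ S i, f ω = c i) :
    ∫⁻ ω, f ω ∂μ ≤ ∑' i, c i * μ (S i) :=
  calc ∫⁻ ω, f ω ∂μ = ∫⁻ ω in ⋃ i, S i, f ω ∂μ := by rw [hS, Measure.restrict_univ]
    _ ≤ ∑' i, ∫⁻ ω in S i, f ω ∂μ := lintegral_iUnion_le S f
    _ = ∑' i, c i * μ (S i) := tsum_congr fun i => by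
      rw [setLIntegral_congr_fun (hSm i) (hf i), setLIntegral_const]

lemma lintegral_comp_le_of_countable_range {α : Type*} [MeasurableSpace α]
    [MeasurableSingletonClass α] {m : MeasurableSpace Ω} (hm : m ≤ mΩ)
    {Z : Ω → α} (hZ : Measurable[m] Z) (hZc : (Set.range Z).Countable)
    {G : α → Ω → ℝ≥0∞} {c : α → ℝ≥0∞}
    (hG : ∀ y E, MeasurableSet[m] E → ∫⁻ ω in E, G y ω ∂μ ≤ μ E * c y) :
    ∫⁻ ω, G (Z ω) ω ∂μ ≤ ∫⁻ ω, c (Z ω) ∂μ := by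
  have : Countable (Set.range Z) := hZc.to_subtype
  set E : Set.range Z → Set Ω := fun y => Z ⁻¹' {y.1}
  have hEm : ∀ y, MeasurableSet[m] (E y) := fun y => hZ (measurableSet_singleton _)
  have hfiber : ∀ F : Ω → ℝ≥0∞, ∫⁻ ω, F ω ∂μ = ∑' y, ∫⁻ ω in E y, F ω ∂μ := by
    intro F
    have hdisj : Pairwise (Function.onFun Disjoint E) := fun y y' hne =>
      Set.disjoint_left.2 fun ω (h : Z ω = y) (h' : Z ω = y') =>
        hne (Subtype.ext (h.symm.trans h'))
    have hcover : ⋃ y, E y = Set.univ :=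
      Set.eq_univ_of_forall fun ω => Set.mem_iUnion.2 ⟨⟨Z ω, ω, rfl⟩, rfl⟩
    rw [← lintegral_iUnion (fun y => hm _ (hEm y)) hdisj, hcover, Measure.restrict_univ]
  calc ∫⁻ ω, G (Z ω) ω ∂μ = ∑' y, ∫⁻ ω in E y, G y ω ∂μ := by
        rw [hfiber]
        exact tsum_congr fun y => setLIntegral_congr_fun (hm _ (hEm y))
          fun ω (hω : Z ω = y) => by rw [hω]
    _ ≤ ∑' y, μ (E y) * c y := ENNReal.tsum_le_tsum fun y => hG y (E y) (hEm y)
    _ = ∫⁻ ω, c (Z ω) ∂μ := by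
        rw [hfiber]
        refine tsum_congr fun y => ?_
        rw [setLIntegral_congr_fun (hm _ (hEm y)) fun ω (hω : Z ω = y) => by rw [hω],
          setLIntegral_const, mul_comm]

end LIntegralDecomposition

section RandomProjections

variable {Ω H : Type*} [MeasurableSpace Ω] {μ : Measure Ω}
  [NormedAddCommGroup H] [InnerProductSpace ℂ H] [MeasurableSpace H] [BorelSpace H]
  {W : ℕ → Submodule ℂ H} [∀ i, CompleteSpace (W i)] {Ψ : ℕ → Ω → (H →L[ℂ] H)}
  {p : ℕ → ℝ≥0∞} {c : ℝ≥0∞}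

lemma setLIntegral_norm_sub_apply_sq_le [TopologicalSpace.SeparableSpace H]
    (hmeas : ∀ k, ∀ x : H, Measurable fun ω => Ψ k ω x)
    (hvalues : ∀ k ω, ∃ i, Ψ k ω = projL (W i))
    (hdist : ∀ k i, μ {ω | Ψ k ω = projL (W i)} = p i)
    (hindep : iIndepFun (m := fun _ : ℕ => strongMS H) Ψ μ)
    (hcontr : ∀ y : H, ∑' i, p i * ENNReal.ofReal (‖y - projL (W i) y‖ ^ 2)
      ≤ c * ENNReal.ofReal (‖y‖ ^ 2))
    {n : ℕ} (y : H) {E : Set Ω} (hE : MeasurableSet[historyMS Ψ n] E) :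
    ∫⁻ ω in E, ENNReal.ofReal (‖y - Ψ (n + 1) ω y‖ ^ 2) ∂μ
      ≤ μ E * (c * ENNReal.ofReal (‖y‖ ^ 2)) := by
  set S : ℕ → Set Ω := fun i => {ω | Ψ (n + 1) ω = projL (W i)}
  have hS : ∀ i, MeasurableSet[(strongMS H).comap (Ψ (n + 1))] (S i) := fun i =>
    ⟨_, measurableSet_singleton_strongMS _, rfl⟩
  have hES : ∀ i, μ.restrict E (S i) = μ E * p i := fun i => by
    rw [Measure.restrict_apply (comap_strongMS_le (hmeas (n + 1)) _ (hS i)), Set.inter_comm,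
      (Indep_iff _ _ _).1 (indep_historyMS_comap_succ hmeas hindep n) _ _ hE (hS i), hdist]
  calc ∫⁻ ω in E, ENNReal.ofReal (‖y - Ψ (n + 1) ω y‖ ^ 2) ∂μ
      ≤ ∑' i, ENNReal.ofReal (‖y - projL (W i) y‖ ^ 2) * μ.restrict E (S i) :=
        lintegral_le_tsum_of_iUnion_eq_univ (fun i => comap_strongMS_le (hmeas (n + 1)) _ (hS i))
          (Set.eq_univ_of_forall fun ω => Set.mem_iUnion.2 (hvalues (n + 1) ω))
          fun i ω (hω : Ψ (n + 1) ω = projL (W i)) => by rw [hω]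
    _ = μ E * ∑' i, p i * ENNReal.ofReal (‖y - projL (W i) y‖ ^ 2) := by
        rw [← ENNReal.tsum_mul_left]
        exact tsum_congr fun i => by rw [hES]; ring
    _ ≤ μ E * (c * ENNReal.ofReal (‖y‖ ^ 2)) := by gcongr; exact hcontr y

variable [IsProbabilityMeasure μ]

lemma lintegral_norm_residualProd_apply_sq_le [TopologicalSpace.SeparableSpace H]
    (hmeas : ∀ k, ∀ x : H, Measurable fun ω => Ψ k ω x)
    (hvalues : ∀ k ω, ∃ i, Ψ k ω = projL (W i))
    (hdist : ∀ k i, μ {ω | Ψ k ω = projL (W i)} = p i)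
    (hindep : iIndepFun (m := fun _ : ℕ => strongMS H) Ψ μ)
    (hcontr : ∀ y : H, ∑' i, p i * ENNReal.ofReal (‖y - projL (W i) y‖ ^ 2)
      ≤ c * ENNReal.ofReal (‖y‖ ^ 2))
    (x : H) (n : ℕ) :
    ∫⁻ ω, ENNReal.ofReal (‖residualProd Ψ ω n x‖ ^ 2) ∂μ ≤ c ^ n * ENNReal.ofReal (‖x‖ ^ 2) := by
  induction n with
  | zero => simp [residualProd]
  | succ n ih =>
    calc ∫⁻ ω, ENNReal.ofReal (‖residualProd Ψ ω (n + 1) x‖ ^ 2) ∂μ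
        ≤ ∫⁻ ω, c * ENNReal.ofReal (‖residualProd Ψ ω n x‖ ^ 2) ∂μ :=
          lintegral_comp_le_of_countable_range (historyMS_le hmeas n)
            (measurable_residualProd_apply hvalues x n)
            (countable_range_residualProd_apply hvalues x n)
            (G := fun y ω => ENNReal.ofReal (‖y - Ψ (n + 1) ω y‖ ^ 2)) fun y _ hE =>
              setLIntegral_norm_sub_apply_sq_le hmeas hvalues hdist hindep hcontr y hE
      _ = c * ∫⁻ ω, ENNReal.ofReal (‖residualProd Ψ ω n x‖ ^ 2) ∂μ :=
          lintegral_const_mul c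
            (measurable_norm_residualProd_apply_sq hmeas hvalues x n).ennreal_ofReal
      _ ≤ c ^ (n + 1) * ENNReal.ofReal (‖x‖ ^ 2) := by
          rw [pow_succ', mul_assoc]
          gcongr

lemma tendsto_integral_norm_residualProd_apply_sq [TopologicalSpace.SeparableSpace H]
    (hc : c < 1) (hmeas : ∀ k, ∀ x : H, Measurable fun ω => Ψ k ω x)
    (hvalues : ∀ k ω, ∃ i, Ψ k ω = projL (W i))
    (hdist : ∀ k i, μ {ω | Ψ k ω = projL (W i)} = p i)
    (hindep : iIndepFun (m := fun _ : ℕ => strongMS H) Ψ μ)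
    (hcontr : ∀ y : H, ∑' i, p i * ENNReal.ofReal (‖y - projL (W i) y‖ ^ 2)
      ≤ c * ENNReal.ofReal (‖y‖ ^ 2))
    (x : H) :
    Tendsto (fun n => ∫ ω, ‖residualProd Ψ ω n x‖ ^ 2 ∂μ) atTop (nhds 0) := by
  have hgeom : Tendsto (fun n => c ^ n * ENNReal.ofReal (‖x‖ ^ 2)) atTop (nhds 0) := by
    simpa only [zero_mul] using ENNReal.Tendsto.mul_const
      (ENNReal.tendsto_pow_atTop_nhds_zero_of_lt_one hc) (.inr ENNReal.ofReal_ne_top)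
  have hlint := tendsto_of_tendsto_of_tendsto_of_le_of_le tendsto_const_nhds hgeom
    (fun _ => zero_le)
    (lintegral_norm_residualProd_apply_sq_le hmeas hvalues hdist hindep hcontr x)
  refine ((ENNReal.tendsto_toReal ENNReal.zero_ne_top).comp hlint).congr fun n => ?_
  exact (integral_eq_lintegral_of_nonneg_ae (ae_of_all _ fun _ => sq_nonneg _)
    (measurable_norm_residualProd_apply_sq hmeas hvalues x n).aestronglyMeasurable).symm

lemma integral_sum_norm_apply_residualProd_sq
    (hmeas : ∀ k, ∀ x : H, Measurable fun ω => Ψ k ω x)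
    (hvalues : ∀ k ω, ∃ i, Ψ k ω = projL (W i)) (x : H) (n : ℕ) :
    ∫ ω, (∑ k ∈ Finset.Icc 1 n, ‖Ψ k ω (residualProd Ψ ω (k - 1) x)‖ ^ 2) ∂μ
      = ‖x‖ ^ 2 - ∫ ω, ‖residualProd Ψ ω n x‖ ^ 2 ∂μ := by
  have hint : Integrable (fun ω => ‖residualProd Ψ ω n x‖ ^ 2) μ :=
    (integrable_const (‖x‖ ^ 2)).mono'
      (measurable_norm_residualProd_apply_sq hmeas hvalues x n).aestronglyMeasurable
      (ae_of_all _ fun ω => by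
        rw [Real.norm_of_nonneg (sq_nonneg _)]
        exact pow_le_pow_left₀ (norm_nonneg _) (norm_residualProd_apply_le hvalues ω x n) 2)
  simp_rw [eq_sub_of_add_eq (sum_norm_apply_residualProd_sq_add hvalues _ x n)]
  rw [integral_sub (integrable_const _) hint, integral_const, probReal_univ, one_smul]

end RandomProjections

theorem fusion_frame_random_parseval_frame_general
    {Ω : Type*} [MeasureSpace Ω] [IsProbabilityMeasure (ℙ : Measure Ω)]
    {H : Type*} [NormedAddCommGroup H] [InnerProductSpace ℂ H]
    [TopologicalSpace.SeparableSpace H]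
    [MeasurableSpace H] [BorelSpace H]
    (W : ℕ → Submodule ℂ H) [∀ i, CompleteSpace (W i)]
    (v : ℕ → ℝ)
    (A : ℝ) (hA : 0 < A)
    (hsummable : ∀ x : H, Summable fun i => v i ^ 2 * ‖projL (W i) x‖ ^ 2)
    (hlow : ∀ x : H, A * ‖x‖ ^ 2 ≤ ∑' i, v i ^ 2 * ‖projL (W i) x‖ ^ 2)
    (hprob : ∑' i, v i ^ 2 = 1)
    (Ψ : ℕ → Ω → (H →L[ℂ] H))
    (hmeas : ∀ k, ∀ x : H, Measurable fun ω => Ψ k ω x)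
    (hvalues : ∀ k ω, ∃ i, Ψ k ω = projL (W i))
    (hdist : ∀ k i, (ℙ : Measure Ω) {ω | Ψ k ω = projL (W i)} = ENNReal.ofReal (v i ^ 2))
    (hindep : iIndepFun (m := fun _ : ℕ => strongMS H) Ψ (ℙ : Measure Ω))
    (x : H) :
    Tendsto
      (fun n => ∫ ω : Ω,
        (∑ k ∈ Finset.Icc 1 n, ‖Ψ k ω (residualProd Ψ ω (k - 1) x)‖ ^ 2) ∂(ℙ : Measure Ω))
      atTop (nhds (‖x‖ ^ 2)) := by
  have hc : ENNReal.ofReal (1 - A) < 1 := ENNReal.ofReal_lt_one.2 (by linarith)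
  have hdecay := tendsto_integral_norm_residualProd_apply_sq hc hmeas hvalues hdist hindep
    (tsum_ofReal_mul_norm_sub_projL_sq_le hsummable hlow hprob) x
  simpa only [integral_sum_norm_apply_residualProd_sq hmeas hvalues, sub_zero] using
    tendsto_const_nhds.sub hdecay

/-- Let `{(W_i, v_i)}` be a fusion frame for `H` with `Σ_i v_i² = 1`, and let
`(Ψ_k)` be an i.i.d. sequence of random operators with `ℙ(Ψ_k = P_{W_i}) = v_i²`. With
`T_k = Ψ_k (I - Ψ_{k-1})⋯(I - Ψ₁)`, for every `x ∈ H`,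
`lim_n 𝔼[Σ_{k=1}^n ‖T_k x‖²] = ‖x‖²`: the family `{T_k}` is a random operator-valued Parseval
frame for `H`. -/
theorem fusion_frame_random_parseval_frame
    {Ω : Type*} [MeasureSpace Ω] [IsProbabilityMeasure (ℙ : Measure Ω)]
    {H : Type*} [NormedAddCommGroup H] [InnerProductSpace ℂ H]
    [CompleteSpace H] [TopologicalSpace.SeparableSpace H]
    [MeasurableSpace H] [BorelSpace H]
    (W : ℕ → Submodule ℂ H) [∀ i, CompleteSpace (W i)]
    (v : ℕ → ℝ) (hv : ∀ i, 0 < v i)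
    (A B : ℝ) (hA : 0 < A) (hB : 0 < B)
    (hsummable : ∀ x : H, Summable fun i => v i ^ 2 * ‖projL (W i) x‖ ^ 2)
    (hlow : ∀ x : H, A * ‖x‖ ^ 2 ≤ ∑' i, v i ^ 2 * ‖projL (W i) x‖ ^ 2)
    (hup : ∀ x : H, ∑' i, v i ^ 2 * ‖projL (W i) x‖ ^ 2 ≤ B * ‖x‖ ^ 2)
    (hprob : ∑' i, v i ^ 2 = 1)
    (Ψ : ℕ → Ω → (H →L[ℂ] H))
    (hmeas : ∀ k, ∀ x : H, Measurable fun ω => Ψ k ω x)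
    (hvalues : ∀ k ω, ∃ i, Ψ k ω = projL (W i))
    (hdist : ∀ k i, (ℙ : Measure Ω) {ω | Ψ k ω = projL (W i)} = ENNReal.ofReal (v i ^ 2))
    (hindep : iIndepFun (m := fun _ : ℕ => strongMS H) Ψ (ℙ : Measure Ω))
    (hident : ∀ i j : ℕ,
      @IdentDistrib Ω Ω (H →L[ℂ] H) _ _ (strongMS H) (Ψ i) (Ψ j) ℙ ℙ)
    (x : H) :
    Tendsto
      (fun n => ∫ ω : Ω,
        (∑ k ∈ Finset.Icc 1 n, ‖Ψ k ω (residualProd Ψ ω (k - 1) x)‖ ^ 2) ∂(ℙ : Measure Ω))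
      atTop (nhds (‖x‖ ^ 2)) :=
  fusion_frame_random_parseval_frame_general W v A hA hsummable hlow hprob Ψ hmeas hvalues hdist
    hindep x
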